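/- arXiv:1401.4626 — 2 statements merged into one kernel-verified Lean document; each statement's English description precedes it below -/
import Mathlib

section
/- Let φ: Γ' → Γ be a harmonic morphism of finite graphs. Then the total degree deg(φ), defined for any vertex p of Γ as the sum over vertices p' mapping to p of the local degrees d_{p'}(φ), is independent of the choice of the vertex p (assuming Γ is connected). -/
/-! Harmonicity at the endpoints of an edge `f` of Γ says that the total local degree over the
fiber of either endpoint equals the total expansion factor of the edges above `f`: each edge `e'`
above `f` is counted once, at its own endpoint. Hence the total degree agrees at the two ends of
every edge, and connectedness of Γ propagates it to all vertices. -/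

open Finset

theorem Relation.ReflTransGen.eq_of_map_eq {α β : Type*} {r : α → α → Prop} (g : α → β)
    (h : ∀ x y, r x y → g x = g y) {x y : α} (hxy : ReflTransGen r x y) : g x = g y := by
  simpa only [reflTransGen_eq_self] using hxy.lift g h

theorem sum_fiber_endpoint_eq_sum_fiber_edge {V E V' E' M : Type*} [Fintype V'] [Fintype E']
    [DecidableEq V] [DecidableEq E] [DecidableEq V'] [AddCommMonoid M]
    (φV : V' → V) (φE : E' → E) (m : E' → M) (locdeg : V' → M)
    (c : E → V) (c' : E' → V') (compat : ∀ e', c (φE e') = φV (c' e')) (f : E)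
    (harm : ∀ v', c f = φV v' →
      ∑ e' ∈ univ.filter (fun e' => φE e' = f ∧ c' e' = v'), m e' = locdeg v') :
    ∑ v' ∈ univ.filter (fun v' => φV v' = c f), locdeg v' =
      ∑ e' ∈ univ.filter (fun e' => φE e' = f), m e' := by
  rw [← sum_fiberwise_of_maps_to (g := c') (t := univ.filter (fun v' => φV v' = c f))
    fun e' he' => by
      simp only [mem_filter, mem_univ, true_and] at he' ⊢
      rw [← compat, he']]
  refine sum_congr rfl fun v' hv' => ?_
  rw [← harm v' (mem_filter.1 hv').2.symm, filter_filter]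

theorem stmt_0_general
    {V E V' E' : Type} [Fintype V'] [Fintype E']
    [DecidableEq V] [DecidableEq E] [DecidableEq V']
    (a b : E → V) (a' b' : E' → V')
    (φV : V' → V) (φE : E' → E)
    (compat_a : ∀ e', a (φE e') = φV (a' e'))
    (compat_b : ∀ e', b (φE e') = φV (b' e'))
    (m : E' → ℕ)
    (locdeg : V' → ℕ)
    -- harmonicity at every vertex: the sum of expansion factors over tangent
    -- directions above any fixed tangent direction at the image equals locdeg
    (harm : ∀ v' : V', ∀ f : E,
      (a f = φV v' →
        ∑ e' ∈ Finset.univ.filter (fun e' => φE e' = f ∧ a' e' = v'), m e' = locdeg v') ∧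
      (b f = φV v' →
        ∑ e' ∈ Finset.univ.filter (fun e' => φE e' = f ∧ b' e' = v'), m e' = locdeg v'))
    -- Γ is connected
    (hconn : ∀ v w : V,
      Relation.ReflTransGen (fun x y => ∃ f : E, (a f = x ∧ b f = y) ∨ (a f = y ∧ b f = x)) v w) :
    ∀ p q : V,
      ∑ v' ∈ Finset.univ.filter (fun v' => φV v' = p), locdeg v' =
      ∑ v' ∈ Finset.univ.filter (fun v' => φV v' = q), locdeg v' := by
  have edge : ∀ f : E,
      ∑ v' ∈ univ.filter (fun v' => φV v' = a f), locdeg v' =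
        ∑ v' ∈ univ.filter (fun v' => φV v' = b f), locdeg v' := fun f => by
    rw [sum_fiber_endpoint_eq_sum_fiber_edge φV φE m locdeg a a' compat_a f
        fun v' => (harm v' f).1,
      sum_fiber_endpoint_eq_sum_fiber_edge φV φE m locdeg b b' compat_b f
        fun v' => (harm v' f).2]
  intro p q
  refine (hconn p q).eq_of_map_eq
    (fun x => ∑ v' ∈ univ.filter (fun v' => φV v' = x), locdeg v') fun x y => ?_
  rintro ⟨f, ⟨rfl, rfl⟩ | ⟨rfl, rfl⟩⟩
  exacts [edge f, (edge f).symm]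

/-- For a harmonic morphism φ : Γ' → Γ of finite graphs (with positive
integer expansion factors on edges, and local degrees `locdeg`), if Γ is connected
then the total degree (the sum of local degrees over a fiber of vertices) is
independent of the chosen base vertex. Graphs are modeled with oriented edges via
their two endpoint maps `a`, `b`. -/
theorem stmt_0
    {V E V' E' : Type} [Fintype V] [Fintype E] [Fintype V'] [Fintype E']
    [DecidableEq V] [DecidableEq E] [DecidableEq V'] [DecidableEq E']
    (a b : E → V) (a' b' : E' → V')
    (φV : V' → V) (φE : E' → E)
    (compat_a : ∀ e', a (φE e') = φV (a' e'))
    (compat_b : ∀ e', b (φE e') = φV (b' e'))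
    (m : E' → ℕ) (hm : ∀ e', 0 < m e')
    (locdeg : V' → ℕ)
    -- harmonicity at every vertex: the sum of expansion factors over tangent
    -- directions above any fixed tangent direction at the image equals locdeg
    (harm : ∀ v' : V', ∀ f : E,
      (a f = φV v' →
        ∑ e' ∈ Finset.univ.filter (fun e' => φE e' = f ∧ a' e' = v'), m e' = locdeg v') ∧
      (b f = φV v' →
        ∑ e' ∈ Finset.univ.filter (fun e' => φE e' = f ∧ b' e' = v'), m e' = locdeg v'))
    -- φ is surjective
    (hsurj : Function.Surjective φV)
    -- Γ is connected
    (hconn : ∀ v w : V,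
      Relation.ReflTransGen (fun x y => ∃ f : E, (a f = x ∧ b f = y) ∨ (a f = y ∧ b f = x)) v w) :
    ∀ p q : V,
      ∑ v' ∈ Finset.univ.filter (fun v' => φV v' = p), locdeg v' =
      ∑ v' ∈ Finset.univ.filter (fun v' => φV v' = q), locdeg v' :=
  stmt_0_general a b a' b' φV φE compat_a compat_b m locdeg harm hconn
end

section
/- Let θ: G_src → G_tgt be a morphism of finite graphs mapping vertices to vertices and edges to edges (contracting no edges), equipped with positive integer expansion factors making it a combinatorial admissible cover. Let c: G_tgt → Ĝ_tgt be the contraction of a single edge e. Then contracting all edges of G_src mapping to e yields a graph Ĝ_src together with a well-defined induced morphism θ̂: Ĝ_src → Ĝ_tgt such that θ̂ ∘ (contraction on source) = c ∘ θ on vertices, and the expansion factors on edges of Ĝ_src agree with those of the corresponding edges of G_src. -/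
open scoped Classical

open Finset

/-!
Contraction of source vertices is compatible with θ because every edge over e₀ has its endpoints
over those of e₀. For harmonicity at a contracted vertex v̂, fix harmonicity numbers N w' for the
source vertices. Summing the fibrewise harmonicity at the vertices w' ∈ v̂ over a target edge f
shows that the expansion factors of edges over f issuing from v̂ add up to
D(u) = ∑ {N w' | w' ∈ v̂, θ w' = u}, where u is the endpoint of f. Applied to e₀ itself, and
using that both endpoints of an edge over e₀ lie in the same class v̂, this gives
D(a e₀) = D(b e₀); so D is constant on contracted target vertices, which is harmonicity.
-/

theorem sum_filter_eq_sum_filter_subtype {ι M : Type*} [Fintype ι] [AddCommMonoid M]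
    {p P : ι → Prop} [DecidablePred p] [DecidablePred P] (hP : ∀ i, P i → p i)
    (g : ι → M) :
    ∑ i ∈ univ.filter P, g i
      = ∑ i ∈ univ.filter (fun i : {i // p i} => P i.val), g i.val := by
  rw [← sum_subtype_map_embedding (g := g) fun _ _ => rfl]
  congr 1
  ext i
  simp only [mem_map, mem_filter, mem_univ, true_and, Function.Embedding.subtype_apply]
  exact ⟨fun hi => ⟨⟨i, hP i hi⟩, hi, rfl⟩, fun ⟨j, hj, hji⟩ => hji ▸ hj⟩

theorem sum_filter_endpoint_mem_eq_sum_fiber {V E V' E' M : Type*} [Fintype V'] [Fintype E']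
    [DecidableEq E] [DecidableEq V'] [AddCommMonoid M]
    {θV : V' → V} {θE : E' → E} {m : E' → M} {s : E → V} {s' : E' → V'} {N : V' → M}
    (hs : ∀ e', s (θE e') = θV (s' e'))
    (hN : ∀ v' f, s f = θV v' →
      ∑ e' ∈ univ.filter (fun e' => θE e' = f ∧ s' e' = v'), m e' = N v')
    (P : V' → Prop) (f : E) :
    ∑ e' ∈ univ.filter (fun e' => θE e' = f ∧ P (s' e')), m e'
      = ∑ w' ∈ univ.filter (fun w' => P w' ∧ θV w' = s f), N w' := by
  have hmaps : ∀ e' ∈ univ.filter (fun e' => θE e' = f ∧ P (s' e')),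
      s' e' ∈ univ.filter (fun w' => P w' ∧ θV w' = s f) := by
    intro e' he'
    simp only [mem_filter, mem_univ, true_and] at he' ⊢
    exact ⟨he'.2, by rw [← hs, he'.1]⟩
  rw [← sum_fiberwise_of_maps_to hmaps]
  refine sum_congr rfl fun w' hw' => ?_
  simp only [mem_filter, mem_univ, true_and] at hw'
  rw [filter_filter, ← hN w' f hw'.2.symm]
  refine sum_congr (filter_congr fun e' _ => ?_) fun _ _ => rfl
  exact ⟨fun ⟨⟨hf, _⟩, hw⟩ => ⟨hf, hw⟩, fun ⟨hf, hw⟩ => ⟨⟨hf, hw ▸ hw'.1⟩, hw⟩⟩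

theorem stmt_9_general
    {V E V' E' : Type} [Fintype V'] [Fintype E']
    [DecidableEq E] [DecidableEq V']
    (a b : E → V) (a' b' : E' → V')
    (θV : V' → V) (θE : E' → E)
    (ca : ∀ e', a (θE e') = θV (a' e'))
    (cb : ∀ e', b (θE e') = θV (b' e'))
    (m : E' → ℕ)
    (harm : ∀ v' : V', ∃ n : ℕ,
      (∀ f : E, a f = θV v' →
        ∑ e' ∈ Finset.univ.filter (fun e' => θE e' = f ∧ a' e' = v'), m e' = n) ∧
      (∀ f : E, b f = θV v' →
        ∑ e' ∈ Finset.univ.filter (fun e' => θE e' = f ∧ b' e' = v'), m e' = n))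
    (e₀ : E) :
    ∃ θhatV :
        Quot (fun v w : V' => ∃ e', θE e' = e₀ ∧
          ((a' e' = v ∧ b' e' = w) ∨ (a' e' = w ∧ b' e' = v))) →
        Quot (fun v w : V => (a e₀ = v ∧ b e₀ = w) ∨ (a e₀ = w ∧ b e₀ = v)),
      -- θ̂ commutes with the contraction maps on vertices
      (∀ v' : V', θhatV (Quot.mk _ v') = Quot.mk _ (θV v')) ∧
      -- the remaining edges (those not over e₀) map with compatible endpoints,
      -- and their expansion factors are unchanged (the induced expansion factor
      -- of ehat is literally m ehat.val)
      (∀ ehat : {e' : E' // θE e' ≠ e₀},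
        Quot.mk _ (a (θE ehat.val)) = θhatV (Quot.mk _ (a' ehat.val)) ∧
        Quot.mk _ (b (θE ehat.val)) = θhatV (Quot.mk _ (b' ehat.val))) ∧
      -- the contracted cover is again harmonic
      (∀ vhat : Quot (fun v w : V' => ∃ e', θE e' = e₀ ∧
          ((a' e' = v ∧ b' e' = w) ∨ (a' e' = w ∧ b' e' = v))), ∃ n : ℕ,
        (∀ f : {f : E // f ≠ e₀}, Quot.mk _ (a f.val) = θhatV vhat →
          ∑ e' ∈ Finset.univ.filter (fun e' : {e' : E' // θE e' ≠ e₀} =>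
              θE e'.val = f.val ∧ Quot.mk _ (a' e'.val) = vhat), m e'.val = n) ∧
        (∀ f : {f : E // f ≠ e₀}, Quot.mk _ (b f.val) = θhatV vhat →
          ∑ e' ∈ Finset.univ.filter (fun e' : {e' : E' // θE e' ≠ e₀} =>
              θE e'.val = f.val ∧ Quot.mk _ (b' e'.val) = vhat), m e'.val = n)) := by
  have hθ : ∀ ⦃v w : V'⦄,
      (∃ e', θE e' = e₀ ∧ ((a' e' = v ∧ b' e' = w) ∨ (a' e' = w ∧ b' e' = v))) →
      (a e₀ = θV v ∧ b e₀ = θV w) ∨ (a e₀ = θV w ∧ b e₀ = θV v) := by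
    rintro v w ⟨e', rfl, ⟨rfl, rfl⟩ | ⟨rfl, rfl⟩⟩
    exacts [Or.inl ⟨ca e', cb e'⟩, Or.inr ⟨ca e', cb e'⟩]
  refine ⟨Quot.map θV hθ, fun v' => rfl,
    fun ehat => ⟨congrArg _ (ca ehat.val), congrArg _ (cb ehat.val)⟩, fun vhat => ?_⟩
  choose N hNa hNb using harm
  set D : V → ℕ := fun u =>
    ∑ w' ∈ univ.filter (fun w' => Quot.mk _ w' = vhat ∧ θV w' = u), N w'
  have hD₀ : D (a e₀) = D (b e₀) := by
    dsimp only [D]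
    rw [← sum_filter_endpoint_mem_eq_sum_fiber ca hNa,
      ← sum_filter_endpoint_mem_eq_sum_fiber cb hNb]
    refine sum_congr (filter_congr fun e' _ => and_congr_right fun he' => ?_) fun _ _ => rfl
    rw [Quot.sound ⟨e', he', Or.inl ⟨rfl, rfl⟩⟩]
  have hD_resp : ∀ u w : V, ((a e₀ = u ∧ b e₀ = w) ∨ (a e₀ = w ∧ b e₀ = u)) →
      D u = D w := by
    rintro u w (⟨rfl, rfl⟩ | ⟨rfl, rfl⟩)
    exacts [hD₀, hD₀.symm]
  have hsub : ∀ (s' : E' → V') (f : {f : E // f ≠ e₀}),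
      ∑ e' ∈ univ.filter (fun e' : {e' : E' // θE e' ≠ e₀} =>
          θE e'.val = f.val ∧ Quot.mk _ (s' e'.val) = vhat), m e'.val
        = ∑ e' ∈ univ.filter (fun e' => θE e' = f.val ∧ Quot.mk _ (s' e') = vhat), m e' :=
    fun _ f => Eq.symm <| sum_filter_eq_sum_filter_subtype (fun _ he' => he'.1 ▸ f.2) m
  refine ⟨Quot.lift D hD_resp (Quot.map θV hθ vhat), fun f hf => ?_, fun f hf => ?_⟩
  · rw [hsub, sum_filter_endpoint_mem_eq_sum_fiber ca hNa (Quot.mk _ · = vhat)]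
    exact congrArg (Quot.lift D hD_resp) hf
  · rw [hsub, sum_filter_endpoint_mem_eq_sum_fiber cb hNb (Quot.mk _ · = vhat)]
    exact congrArg (Quot.lift D hD_resp) hf

/-- Contracting a single edge e₀ of the target of a combinatorial
admissible cover θ : G_src → G_tgt (a surjective, harmonic graph morphism with
positive integer expansion factors m), and contracting all source edges lying over
e₀, yields an induced morphism θ̂ of the contracted graphs which commutes with the
contractions on vertices, maps the remaining edges compatibly with endpoints,
keeps the same expansion factors on the remaining edges, and is again harmonic.
Graphs are modeled by their two endpoint maps; contracted vertex sets are the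
quotients identifying the endpoints of the contracted edges. -/
theorem stmt_9
    {V E V' E' : Type} [Fintype V] [Fintype E] [Fintype V'] [Fintype E']
    [DecidableEq V] [DecidableEq E] [DecidableEq V'] [DecidableEq E']
    (a b : E → V) (a' b' : E' → V')
    (θV : V' → V) (θE : E' → E)
    (ca : ∀ e', a (θE e') = θV (a' e'))
    (cb : ∀ e', b (θE e') = θV (b' e'))
    (hsurjV : Function.Surjective θV) (hsurjE : Function.Surjective θE)
    (m : E' → ℕ) (hm : ∀ e', 0 < m e')
    (harm : ∀ v' : V', ∃ n : ℕ,
      (∀ f : E, a f = θV v' →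
        ∑ e' ∈ Finset.univ.filter (fun e' => θE e' = f ∧ a' e' = v'), m e' = n) ∧
      (∀ f : E, b f = θV v' →
        ∑ e' ∈ Finset.univ.filter (fun e' => θE e' = f ∧ b' e' = v'), m e' = n))
    (e₀ : E) :
    ∃ θhatV :
        Quot (fun v w : V' => ∃ e', θE e' = e₀ ∧
          ((a' e' = v ∧ b' e' = w) ∨ (a' e' = w ∧ b' e' = v))) →
        Quot (fun v w : V => (a e₀ = v ∧ b e₀ = w) ∨ (a e₀ = w ∧ b e₀ = v)),
      -- θ̂ commutes with the contraction maps on vertices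
      (∀ v' : V', θhatV (Quot.mk _ v') = Quot.mk _ (θV v')) ∧
      -- the remaining edges (those not over e₀) map with compatible endpoints,
      -- and their expansion factors are unchanged (the induced expansion factor
      -- of ehat is literally m ehat.val)
      (∀ ehat : {e' : E' // θE e' ≠ e₀},
        Quot.mk _ (a (θE ehat.val)) = θhatV (Quot.mk _ (a' ehat.val)) ∧
        Quot.mk _ (b (θE ehat.val)) = θhatV (Quot.mk _ (b' ehat.val))) ∧
      -- the contracted cover is again harmonic
      (∀ vhat : Quot (fun v w : V' => ∃ e', θE e' = e₀ ∧
          ((a' e' = v ∧ b' e' = w) ∨ (a' e' = w ∧ b' e' = v))), ∃ n : ℕ,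
        (∀ f : {f : E // f ≠ e₀}, Quot.mk _ (a f.val) = θhatV vhat →
          ∑ e' ∈ Finset.univ.filter (fun e' : {e' : E' // θE e' ≠ e₀} =>
              θE e'.val = f.val ∧ Quot.mk _ (a' e'.val) = vhat), m e'.val = n) ∧
        (∀ f : {f : E // f ≠ e₀}, Quot.mk _ (b f.val) = θhatV vhat →
          ∑ e' ∈ Finset.univ.filter (fun e' : {e' : E' // θE e' ≠ e₀} =>
              θE e'.val = f.val ∧ Quot.mk _ (b' e'.val) = vhat), m e'.val = n)) :=
  stmt_9_general a b a' b' θV θE ca cb m harm e₀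
end
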